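/- arXiv:1909.06898 — 2 statements merged into one kernel-verified Lean document; each statement's English description precedes it below -/
import Mathlib

section
/- Let M = Σ_{i=m}^{n} a_i S_{λ,μ}^i ∈ A_{λ,μ} with m ≤ n integers and a_i ∈ K(x,y). Then the left scalar remainder of M by S_y − 1 is given by LSR(M, S_y − 1) = Σ_{r=0}^{μ−1} ( Σ_{i_r} σ_y^{−q_{i_r}}(a_{i_r}) ) S_{λ,μ}^r, where for each r the inner sum runs over all integers i_r with m ≤ i_r ≤ n such that i_r = μ q_{i_r} + r for some integer q_{i_r}. -/
open Polynomial BigOperators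

noncomputable section

/-- The shift automorphism `X ↦ X + 1` of a polynomial ring. -/
def shiftPoly (A : Type*) [CommRing A] : Polynomial A ≃ₐ[A] Polynomial A :=
  AlgEquiv.ofAlgHom (aeval (X + 1)) (aeval (X - 1))
    (by apply algHom_ext; simp) (by apply algHom_ext; simp)

variable (K : Type*) [Field K] [CharZero K]

/-- `K[x,y]` modelled as `K[x][y]`: the inner variable is `x`, the outer one is `y`. -/
abbrev Rxy := Polynomial (Polynomial K)

/-- The rational function field `K(x,y)`, as the fraction field of `K[x][y]`. -/
abbrev Fxy := FractionRing (Rxy K)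

/-- The shift `x ↦ x + 1` on `K[x]`. -/
def σxK : RingAut (Polynomial K) := (shiftPoly K).toRingEquiv

/-- The shift `x ↦ x + 1` on `K[x,y]`. -/
def σxR : RingAut (Rxy K) := mapEquiv (shiftPoly K).toRingEquiv

/-- The shift `y ↦ y + 1` on `K[x,y]`. -/
def σyR : RingAut (Rxy K) := (shiftPoly (Polynomial K)).toRingEquiv

/-- The shift `σ_x` on `K(x,y)`. -/
def σxF : RingAut (Fxy K) := IsFractionRing.ringEquivOfRingEquiv (σxR K)

/-- The shift `σ_y` on `K(x,y)`. -/
def σyF : RingAut (Fxy K) := IsFractionRing.ringEquivOfRingEquiv (σyR K)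

/-- The canonical map `K[x,y] → K(x,y)`. -/
def ι₀ : Rxy K →+* Fxy K := algebraMap (Rxy K) (Fxy K)

/-- The canonical map `K[x] → K(x,y)`. -/
def ιx₀ : Polynomial K →+* Fxy K := (ι₀ K).comp (Polynomial.C : Polynomial K →+* Rxy K)

/-- The canonical map `K → K(x,y)`. -/
def ιK : K →+* Fxy K := (ιx₀ K).comp (Polynomial.C : K →+* Polynomial K)

/-- The element `x` of `K(x,y)`. -/
def xF : Fxy K := ιx₀ K X

/-- The element `y` of `K(x,y)`. -/
def yF : Fxy K := ι₀ K X

/-- A rational function `f ∈ K(x,y)` is `σ_y`-summable if `f = σ_y(g) - g`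
for some `g ∈ K(x,y)`. -/
def IsSummableY (f : Fxy K) : Prop := ∃ g : Fxy K, f = σyF K g - g

/-- The Laurent operator ring `A = K(x,y)[S_x,S_y,S_x⁻¹,S_y⁻¹]`, an operator being
recorded by its (finitely supported) family of coefficients `a_{ij}` in
`L = Σ a_{ij} S_x^i S_y^j`. -/
abbrev OpA := (ℤ × ℤ) →₀ Fxy K

/-- The subring `A_{λ,μ} = K(x,y)[S_{λ,μ}, S_{λ,μ}⁻¹]`, an operator being recorded by its
(finitely supported) family of coefficients `a_i` in `M = Σ a_i S_{λ,μ}^i`. -/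
abbrev OpB := ℤ →₀ Fxy K

/-- The automorphism `σ_x^i σ_y^j` of `K(x,y)` attached to the monomial `S_x^i S_y^j`. -/
def σv (v : ℤ × ℤ) : RingAut (Fxy K) := σxF K ^ v.1 * σyF K ^ v.2

/-- Multiplication in `A`, determined by the commutation rule `S_x^i S_y^j f
= σ_x^i σ_y^j (f) S_x^i S_y^j`. -/
def mulA (L M : OpA K) : OpA K :=
  L.sum fun p a => M.sum fun q b => Finsupp.single (p + q) (a * σv K p b)

/-- The application of an operator `L = Σ a_{ij} S_x^i S_y^j ∈ A` to a rational function. -/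
def applyA (L : OpA K) (f : Fxy K) : Fxy K := L.sum fun p a => a * σv K p f

/-- The operator `S_y - 1 ∈ A`. -/
def SyOne : OpA K :=
  Finsupp.single ((0 : ℤ), (1 : ℤ)) (1 : Fxy K) - Finsupp.single ((0 : ℤ), (0 : ℤ)) (1 : Fxy K)

section TypeLamMu

/- `α`, `β` are the Bézout cofactors for the integer-linear type `(λ, μ)`,
so that `S_{λ,μ} = S_x^α S_y^β`. -/
variable (α β : ℤ)

/-- The automorphism `σ_{λ,μ} = σ_x^α σ_y^β` of `K(x,y)` attached to `S_{λ,μ} = S_x^α S_y^β`. -/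
def τF : RingAut (Fxy K) := σxF K ^ α * σyF K ^ β

/-- Multiplication in `A_{λ,μ}`. -/
def mulB (L M : OpB K) : OpB K :=
  L.sum fun i a => M.sum fun j b => Finsupp.single (i + j) (a * (τF K α β ^ i) b)

/-- The application of an operator `M = Σ a_i S_{λ,μ}^i ∈ A_{λ,μ}` to a rational function. -/
def applyB (M : OpB K) (f : Fxy K) : Fxy K := M.sum fun i a => a * (τF K α β ^ i) f

/-- The inclusion `A_{λ,μ} ⊆ A`, sending `S_{λ,μ}^k` to `S_x^{kα} S_y^{kβ}`. -/
def ιB (M : OpB K) : OpA K := Finsupp.mapDomain (fun k : ℤ => (k * α, k * β)) M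

/-- The left `K(x,y)`-linear map `φ_{λ,μ} : A → A_{λ,μ}`,
sending `Σ a_{ij} S_x^i S_y^j` to `Σ a_{ij} S_{λ,μ}^{iλ+jμ}`. -/
def φB (lam μ : ℤ) (L : OpA K) : OpB K :=
  Finsupp.mapDomain (fun p : ℤ × ℤ => p.1 * lam + p.2 * μ) L

/-- The left scalar multiplication `L ⊙ M = φ_{λ,μ}(L M)` of `L ∈ A` on `M ∈ A_{λ,μ}`. -/
def odot (lam μ : ℤ) (L : OpA K) (M : OpB K) : OpB K :=
  φB K lam μ (mulA K L (ιB K α β M))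

end TypeLamMu

/-- The lowest order `lord(M)` of a (nonzero) operator `M ∈ A_{λ,μ}`. -/
def lord (M : OpB K) : ℤ := (M.support.min).untopD 0

/-- The highest order `hord(M)` of a (nonzero) operator `M ∈ A_{λ,μ}`. -/
def hord (M : OpB K) : ℤ := (M.support.max).unbotD 0

/-- The inclusion `K(x,y)[S_y, S_y⁻¹] ⊆ A`. -/
def ιy (L : ℤ →₀ Fxy K) : OpA K := Finsupp.mapDomain (fun j : ℤ => ((0 : ℤ), j)) L

/-- The inclusion `K[x][S_x] ⊆ A`, for operators with polynomial coefficients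
supported on nonnegative powers of `S_x`. -/
def ιxOp (L : ℕ →₀ Polynomial K) : OpA K :=
  L.sum fun ℓ c => Finsupp.single ((ℓ : ℤ), (0 : ℤ)) (ιx₀ K c)

/-- A nonzero operator `L = Σ c_ℓ S_x^ℓ ∈ K[x][S_x]` is a telescoper for `f ∈ K(x,y)`
if `L(f)` is `σ_y`-summable. -/
def IsTelescoper (L : ℕ →₀ Polynomial K) (f : Fxy K) : Prop :=
  L ≠ 0 ∧ IsSummableY K (applyA K (ιxOp K L) f)

/-- The degree in `x` of a polynomial in `K[x,y] = K[x][y]`. -/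
def degX (r : Rxy K) : ℕ := r.support.sup fun n => (r.coeff n).natDegree

/-- The total degree in `x, y` of a polynomial in `K[x,y] = K[x][y]`. -/
def degXY (r : Rxy K) : ℕ := r.support.sup fun n => n + (r.coeff n).natDegree

end

/-! `(S_y − 1) ⊙ (b S_{λ,μ}^k) = σ_y(b) S_{λ,μ}^{k+μ} − b S_{λ,μ}^k`, so modulo the image of
`Q ↦ (S_y − 1) ⊙ Q` the term `b S_{λ,μ}^{k+μ}` may be replaced by `σ_y^{-1}(b) S_{λ,μ}^k`.
Iterating in both directions reduces `a S_{λ,μ}^i` to `σ_y^{-q}(a) S_{λ,μ}^r` where `i = qμ + r`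
with `0 ≤ r < μ`. The remainder found this way has support in `[0, μ)`, while
`φ_{λ,μ}(S_y − 1) = S_{λ,μ}^μ − 1` has `lord = 0` and `hord = μ`. -/

theorem AddSubgroup.sub_mem_of_forall_add_one_sub_mem {G : Type*} [AddGroup G]
    (H : AddSubgroup G) (f : ℤ → G) (hf : ∀ n, f (n + 1) - f n ∈ H) (n : ℤ) :
    f n - f 0 ∈ H := by
  induction n using Int.induction_on with
  | zero => simp
  | succ n ih => simpa using H.add_mem (hf n) ih
  | pred n ih =>
    have h := H.add_mem (H.neg_mem (hf (-(n : ℤ) - 1))) ih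
    rwa [sub_add_cancel, neg_sub, sub_add_sub_cancel] at h

section Operators

variable {K : Type*} [Field K]

theorem mulA_add_right (L M₁ M₂ : OpA K) :
    mulA K L (M₁ + M₂) = mulA K L M₁ + mulA K L M₂ := by
  unfold mulA
  rw [← Finsupp.sum_add]
  refine Finsupp.sum_congr fun p _ => Finsupp.sum_add_index' (by simp) fun q b₁ b₂ => ?_
  rw [map_add, mul_add, Finsupp.single_add]

theorem mulA_zero_right (L : OpA K) : mulA K L 0 = 0 := by
  simp [mulA]

theorem mulA_sub_left (L₁ L₂ M : OpA K) :
    mulA K (L₁ - L₂) M = mulA K L₁ M - mulA K L₂ M :=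
  Finsupp.sum_sub_index fun p a₁ a₂ => by
    rw [← Finsupp.sum_sub]
    exact Finsupp.sum_congr fun q _ => by rw [sub_mul, Finsupp.single_sub]

theorem mulA_single_single (p q : ℤ × ℤ) (a b : Fxy K) :
    mulA K (Finsupp.single p a) (Finsupp.single q b) =
      Finsupp.single (p + q) (a * σv K p b) := by
  simp [mulA]

theorem σv_zero_zero : σv K (0, 0) = 1 := by
  simp [σv]

theorem σv_zero_one : σv K (0, 1) = σyF K := by
  simp [σv]

variable (α β lam μ : ℤ)

noncomputable def odotHom (L : OpA K) : OpB K →+ OpB K where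
  toFun := odot K α β lam μ L
  map_zero' := by simp [odot, ιB, mulA_zero_right, φB]
  map_add' M₁ M₂ := by
    simp only [odot, ιB, φB, Finsupp.mapDomain_add, mulA_add_right]

@[simp]
theorem odotHom_apply (L : OpA K) (M : OpB K) :
    odotHom α β lam μ L M = odot K α β lam μ L M :=
  rfl

variable {α β lam μ}

theorem odot_SyOne_single (hbez : α * lam + β * μ = 1) (k : ℤ) (b : Fxy K) :
    odot K α β lam μ (SyOne K) (Finsupp.single k b) =
      Finsupp.single (k + μ) (σyF K b) - Finsupp.single k b := by
  have h₁ : k * α * lam + (1 + k * β) * μ = k + μ := by linear_combination k * hbez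
  have h₀ : k * α * lam + k * β * μ = k := by linear_combination k * hbez
  simp [odot, ιB, φB, SyOne, mulA_sub_left, mulA_single_single, Finsupp.mapDomain_sub,
    σv_zero_zero, σv_zero_one, h₀, h₁]

end Operators

section Remainder

variable {K : Type*} [Field K] {α β lam μ : ℤ}

theorem single_sub_single_mem_range_odotHom (hbez : α * lam + β * μ = 1)
    (k n : ℤ) (c : Fxy K) :
    Finsupp.single (k + μ * n) ((σyF K ^ n) c) - Finsupp.single k c ∈
      (odotHom α β lam μ (SyOne K)).range := by
  simpa using (odotHom α β lam μ (SyOne K)).range.sub_mem_of_forall_add_one_sub_mem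
    (fun n => Finsupp.single (k + μ * n) ((σyF K ^ n) c))
    (fun n => ⟨Finsupp.single (k + μ * n) ((σyF K ^ n) c), by
      rw [odotHom_apply, odot_SyOne_single hbez, mul_add_one, ← add_assoc, add_comm n 1,
        zpow_one_add]
      rfl⟩) n

variable (K μ) in
noncomputable def lsrSyOne (M : OpB K) : OpB K :=
  M.sum fun i a => Finsupp.single (i % μ) ((σyF K ^ (-(i / μ))) a)

theorem sub_lsrSyOne_mem_range_odotHom (hbez : α * lam + β * μ = 1) (M : OpB K) :
    M - lsrSyOne K μ M ∈ (odotHom α β lam μ (SyOne K)).range := by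
  have hsum : M - lsrSyOne K μ M = M.sum fun i a =>
      Finsupp.single i a - Finsupp.single (i % μ) ((σyF K ^ (-(i / μ))) a) := by
    rw [lsrSyOne, Finsupp.sum_sub, Finsupp.sum_single]
  rw [hsum]
  refine AddSubmonoidClass.finsuppSum_mem _ _ _ fun i _ => ?_
  have h := single_sub_single_mem_range_odotHom (K := K) hbez (i % μ) (i / μ)
    ((σyF K ^ (-(i / μ))) (M i))
  have hcancel : (σyF K ^ (i / μ)) ((σyF K ^ (-(i / μ))) (M i)) = M i := by
    change (σyF K ^ (i / μ) * σyF K ^ (-(i / μ))) (M i) = M i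
    rw [← zpow_add, add_neg_cancel, zpow_zero]
    rfl
  rwa [Int.emod_add_mul_ediv, hcancel] at h

end Remainder

section Orders

variable {K : Type*} [Field K] {lam μ : ℤ}

theorem lord_eq_min' {N : OpB K} (hN : N.support.Nonempty) : lord K N = N.support.min' hN := by
  rw [lord, ← Finset.coe_min' hN, WithTop.untopD_coe]

theorem hord_eq_max' {N : OpB K} (hN : N.support.Nonempty) : hord K N = N.support.max' hN := by
  rw [hord, ← Finset.coe_max' hN, WithBot.unbotD_coe]

theorem lord_mem_support {N : OpB K} (hN : N ≠ 0) : lord K N ∈ N.support := by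
  rw [lord_eq_min' (Finsupp.support_nonempty_iff.2 hN)]
  exact Finset.min'_mem _ _

theorem hord_mem_support {N : OpB K} (hN : N ≠ 0) : hord K N ∈ N.support := by
  rw [hord_eq_max' (Finsupp.support_nonempty_iff.2 hN)]
  exact Finset.max'_mem _ _

theorem lord_le_hord {N : OpB K} (hN : N ≠ 0) : lord K N ≤ hord K N := by
  have hne := Finsupp.support_nonempty_iff.2 hN
  rw [lord_eq_min' hne, hord_eq_max' hne]
  exact Finset.min'_le_max' _ hne

theorem phiB_SyOne : φB K lam μ (SyOne K) = Finsupp.single μ 1 - Finsupp.single 0 1 := by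
  simp [φB, SyOne, Finsupp.mapDomain_sub]

theorem support_phiB_SyOne (hμ : μ ≠ 0) : (φB K lam μ (SyOne K)).support = {0, μ} := by
  ext j
  by_cases hj : j = 0 <;> by_cases hj' : j = μ <;> simp_all [phiB_SyOne]

theorem lord_phiB_SyOne (hμ : 0 < μ) : lord K (φB K lam μ (SyOne K)) = 0 := by
  rw [lord_eq_min' (by simp [support_phiB_SyOne hμ.ne'])]
  simp [support_phiB_SyOne hμ.ne', hμ.le]

theorem hord_phiB_SyOne (hμ : 0 < μ) : hord K (φB K lam μ (SyOne K)) = μ := by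
  rw [hord_eq_max' (by simp [support_phiB_SyOne hμ.ne'])]
  simp [support_phiB_SyOne hμ.ne', hμ.le]

theorem support_lsrSyOne_subset (hμ : 0 < μ) (M : OpB K) :
    (lsrSyOne K μ M).support ⊆ Finset.Ico 0 μ := by
  refine Finsupp.support_sum.trans (Finset.biUnion_subset.2 fun i _ => ?_)
  refine Finsupp.support_single_subset.trans (Finset.singleton_subset_iff.2 ?_)
  exact Finset.mem_Ico.2 ⟨Int.emod_nonneg i hμ.ne', Int.emod_lt_of_pos i hμ⟩

end Orders

theorem statement6_general (K : Type*) [Field K]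
    (lam μ α β : ℤ) (hμ : 0 < μ)
    (hbez : α * lam + β * μ = 1)
    (M : OpB K) :
    ∃ Q : OpB K,
      M = odot K α β lam μ (SyOne K) Q +
          M.sum (fun i a => Finsupp.single (i % μ) ((σyF K ^ (-(i / μ))) a)) ∧
        (M.sum (fun i a => Finsupp.single (i % μ) ((σyF K ^ (-(i / μ))) a)) = 0 ∨
          (lord K (φB K lam μ (SyOne K)) ≤
              lord K (M.sum fun i a => Finsupp.single (i % μ) ((σyF K ^ (-(i / μ))) a)) ∧
            lord K (M.sum fun i a => Finsupp.single (i % μ) ((σyF K ^ (-(i / μ))) a)) ≤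
              hord K (M.sum fun i a => Finsupp.single (i % μ) ((σyF K ^ (-(i / μ))) a)) ∧
            hord K (M.sum fun i a => Finsupp.single (i % μ) ((σyF K ^ (-(i / μ))) a)) <
              hord K (φB K lam μ (SyOne K)))) := by
  obtain ⟨Q, hQ⟩ := sub_lsrSyOne_mem_range_odotHom hbez M
  refine ⟨Q, sub_eq_iff_eq_add.1 hQ.symm, ?_⟩
  change lsrSyOne K μ M = 0 ∨ _
  rcases eq_or_ne (lsrSyOne K μ M) 0 with hR | hR
  · exact Or.inl hR
  have hsupp := support_lsrSyOne_subset hμ M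
  refine Or.inr ⟨?_, lord_le_hord hR, ?_⟩
  · rw [lord_phiB_SyOne hμ]
    exact (Finset.mem_Ico.1 (hsupp (lord_mem_support hR))).1
  · rw [hord_phiB_SyOne hμ]
    exact (Finset.mem_Ico.1 (hsupp (hord_mem_support hR))).2

/-- Remark `REM:formulas`, remainder formula.
Let `M = Σ_{i=m}^{n} a_i S_{λ,μ}^i ∈ A_{λ,μ}`.  Then the left scalar remainder of `M` by
`S_y − 1` is `Σ_{r=0}^{μ−1} (Σ_{i_r} σ_y^{−q_{i_r}}(a_{i_r})) S_{λ,μ}^r`, where for each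
`r` the inner sum runs over all `i_r` with `i_r = μ q_{i_r} + r`; i.e. this operator `R`
satisfies the defining property of the left scalar remainder:
`M = (S_y − 1) ⊙ Q + R` for some `Q`, with `R = 0` or
`lord(φ(S_y − 1)) ≤ lord(R) ≤ hord(R) < hord(φ(S_y − 1))`. -/
theorem statement6 (K : Type*) [Field K] [CharZero K]
    (lam μ α β : ℤ) (hμ : 0 < μ) (hcop : IsCoprime lam μ)
    (hbez : α * lam + β * μ = 1) (hα : 0 ≤ α ∧ α < μ)
    (hβ : lam ≠ 0 → |β| ≤ |lam|) (hβ0 : lam = 0 → α = 0 ∧ β = 1)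
    (M : OpB K) :
    ∃ Q : OpB K,
      M = odot K α β lam μ (SyOne K) Q +
          M.sum (fun i a => Finsupp.single (i % μ) ((σyF K ^ (-(i / μ))) a)) ∧
        (M.sum (fun i a => Finsupp.single (i % μ) ((σyF K ^ (-(i / μ))) a)) = 0 ∨
          (lord K (φB K lam μ (SyOne K)) ≤
              lord K (M.sum fun i a => Finsupp.single (i % μ) ((σyF K ^ (-(i / μ))) a)) ∧
            lord K (M.sum fun i a => Finsupp.single (i % μ) ((σyF K ^ (-(i / μ))) a)) ≤
              hord K (M.sum fun i a => Finsupp.single (i % μ) ((σyF K ^ (-(i / μ))) a)) ∧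
            hord K (M.sum fun i a => Finsupp.single (i % μ) ((σyF K ^ (-(i / μ))) a)) <
              hord K (φB K lam μ (SyOne K)))) :=
  statement6_general K lam μ α β hμ hbez M
end

section
/- Let r, r_0 ∈ K(x,y) be two nonzero σ_y-remainders, and let r = f_0/p_0 + Σ_{i=1}^{m} f_i/σ_y^{ℓ_i}(p_i) be the SCD-based partial fraction decomposition of r with respect to r_0. Define r̃ = f_0/p_0 + Σ_{i=1}^{m} σ_y^{−ℓ_i}(f_i)/p_i. Then r̃ is a σ_y-remainder of r (i.e., r − r̃ is σ_y-summable, r̃ is proper with respect to y, and its denominator is σ_y-free), and for any c_0, c_1 ∈ K[x], the rational function c_0 r_0 + c_1 r̃ is proper with respect to y with σ_y-free denominator (hence is a σ_y-remainder). -/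
open Polynomial BigOperators

noncomputable section

variable (K : Type*) [Field K] [CharZero K]

/-- The element `λx + μy` of `K(x,y)`. -/
def wF (lam μ : ℤ) : Fxy K := (lam : Fxy K) * xF K + (μ : Fxy K) * yF K

/-- The rational function `p(λx + μy) ∈ K(x,y)`, for a univariate polynomial `p ∈ K[z]`. -/
def peF (lam μ : ℤ) (p : Polynomial K) : Fxy K := Polynomial.eval₂ (ιK K) (wF K lam μ) p

/-- The element `λx + μy` of `K[x,y]`. -/
def wR (lam μ : ℤ) : Rxy K :=
  (lam : Rxy K) * Polynomial.C Polynomial.X + (μ : Rxy K) * Polynomial.X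

/-- The polynomial `p(λx + μy) ∈ K[x,y]`, for a univariate polynomial `p ∈ K[z]`. -/
def peR (lam μ : ℤ) (p : Polynomial K) : Rxy K :=
  Polynomial.eval₂ (algebraMap K (Rxy K)) (wR K lam μ) p

end

noncomputable section

variable (K : Type*) [Field K] [CharZero K]

/-- A nonzero polynomial `b ∈ K[x,y]` is `σ_y`-free if `gcd(b, σ_y^ℓ(b)) ∈ K[x]` for all
nonzero integers `ℓ`, i.e. every common divisor of `b` and `σ_y^ℓ(b)` has `y`-degree `0`. -/
def SigmaYFree (b : Rxy K) : Prop :=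
  ∀ ℓ : ℤ, ℓ ≠ 0 → ∀ d : Rxy K, d ∣ b → d ∣ (σyR K ^ ℓ) b → d.natDegree = 0

/-- A polynomial in `K[x,y] = K[x][y]` is `y`-primitive if the gcd over `K[x]` of its
coefficients with respect to `y` equals `1`. -/
def YPrimitive (b : Rxy K) : Prop :=
  ∀ d : Polynomial K, (∀ n : ℕ, d ∣ b.coeff n) → IsUnit d

/-- A rational function is proper with respect to `y`: the degree in `y` of its numerator
is less than that of its denominator. -/
def ProperY (f : Fxy K) : Prop :=
  ∃ a b : Rxy K, b ≠ 0 ∧ f = ι₀ K a / ι₀ K b ∧ a.degree < b.degree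

/-- A rational function has a `σ_y`-free denominator (in lowest terms). -/
def SigmaYFreeDenom (f : Fxy K) : Prop :=
  ∃ a b : Rxy K, b ≠ 0 ∧ IsRelPrime a b ∧ f = ι₀ K a / ι₀ K b ∧ SigmaYFree K b

/-- `r` is a `σ_y`-remainder (of itself): proper with respect to `y`, with `σ_y`-free
denominator. -/
def IsSigmaYRemainder (r : Fxy K) : Prop := ProperY K r ∧ SigmaYFreeDenom K r

/-- `r` is a `σ_y`-remainder of `f`: `f − r` is `σ_y`-summable, `r` is proper with
respect to `y`, and the denominator of `r` is `σ_y`-free. -/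
def IsSigmaYRemainderOf (r f : Fxy K) : Prop :=
  IsSummableY K (f - r) ∧ IsSigmaYRemainder K r

end

/-!
Each summand `fᵢ / σ_y^{ℓᵢ}(pᵢ)` of `r` equals `σ_y^{ℓᵢ}(g)` for `g = σ_y^{-ℓᵢ}(fᵢ) / pᵢ`,
so it differs from the corresponding summand of `r̃` by the telescoping difference
`σ_y^{ℓᵢ}(g) - g`; hence `r - r̃` is `σ_y`-summable. Shifts preserve `y`-degrees, so `r̃` stays
proper. Both `r₀` and `r̃` can be written over the common denominator `w · b₀ · p₀ · ∏ pᵢ` with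
`w ∈ K[x]`. Its prime factors of positive `y`-degree divide `b₀ p₀`, which is `σ_y`-free: `b₀` and
`p₀ ∣ b` are, and no nonzero shift of `p₀` shares a factor with `b₀`. So every
`K[x]`-combination of `r₀` and `r̃` has a `σ_y`-free denominator.
-/

section Shift

variable {K : Type*} [Field K]

lemma ι₀_ne_zero {b : Rxy K} (hb : b ≠ 0) : ι₀ K b ≠ 0 :=
  (map_ne_zero_iff _ (IsFractionRing.injective (Rxy K) (Fxy K))).mpr hb

lemma ιx₀_mul_ι₀ (u : Polynomial K) (b : Rxy K) : ιx₀ K u * ι₀ K b = ι₀ K (C u * b) :=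
  ((ι₀ K).map_mul _ _).symm

lemma σyR_apply_eq_taylor (p : Rxy K) : σyR K p = taylor 1 p := by
  rw [taylor_apply, C_1]
  rfl

lemma σyR_zpow_apply (ℓ : ℤ) (p : Rxy K) : (σyR K ^ ℓ) p = taylor (ℓ : Polynomial K) p := by
  induction ℓ using Int.induction_on generalizing p with
  | zero => simp
  | succ n ih =>
    rw [zpow_add_one, RingAut.mul_apply, ih, σyR_apply_eq_taylor, taylor_taylor]
    push_cast; rfl
  | pred n ih =>
    have hinv : (σyR K)⁻¹ p = taylor (-1) p := by
      rw [RingAut.inv_apply, RingEquiv.symm_apply_eq, σyR_apply_eq_taylor, taylor_taylor,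
        add_neg_cancel, taylor_zero]
    rw [zpow_sub_one, RingAut.mul_apply, hinv, ih, taylor_taylor]
    push_cast; ring_nf

lemma σyR_zpow_C (ℓ : ℤ) (u : Polynomial K) : (σyR K ^ ℓ) (C u) = C u := by
  rw [σyR_zpow_apply, taylor_C]

lemma degree_σyR_zpow (ℓ : ℤ) (p : Rxy K) : ((σyR K ^ ℓ) p).degree = p.degree := by
  rw [σyR_zpow_apply, degree_taylor]

lemma natDegree_σyR_zpow (ℓ : ℤ) (p : Rxy K) : ((σyR K ^ ℓ) p).natDegree = p.natDegree := by
  rw [σyR_zpow_apply, natDegree_taylor]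

lemma σyR_zpow_dvd_iff (ℓ : ℤ) (q p : Rxy K) : (σyR K ^ ℓ) q ∣ p ↔ q ∣ (σyR K ^ (-ℓ)) p := by
  rw [← map_dvd_iff (σyR K ^ (-ℓ)), ← RingAut.mul_apply, ← zpow_add, neg_add_cancel, zpow_zero,
    RingAut.one_apply]

lemma σyF_ι₀ (p : Rxy K) : σyF K (ι₀ K p) = ι₀ K (σyR K p) :=
  IsFractionRing.ringEquivOfRingEquiv_algebraMap (σyR K) p

lemma σyF_zpow_ι₀ (ℓ : ℤ) (p : Rxy K) : (σyF K ^ ℓ) (ι₀ K p) = ι₀ K ((σyR K ^ ℓ) p) := by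
  induction ℓ using Int.induction_on generalizing p with
  | zero => rfl
  | succ n ih => rw [zpow_add_one, zpow_add_one, RingAut.mul_apply, σyF_ι₀, ih]; rfl
  | pred n ih =>
    have hinv : (σyF K)⁻¹ (ι₀ K p) = ι₀ K ((σyR K)⁻¹ p) := by
      rw [RingAut.inv_apply, RingEquiv.symm_apply_eq, σyF_ι₀, RingAut.inv_apply,
        RingEquiv.apply_symm_apply]
    rw [zpow_sub_one, zpow_sub_one, RingAut.mul_apply, hinv, ih]; rfl

lemma σyF_zpow_div_ιx₀ (ℓ : ℤ) (a : Rxy K) (u : Polynomial K) :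
    (σyF K ^ ℓ) (ι₀ K a / ιx₀ K u) = ι₀ K ((σyR K ^ ℓ) a) / ιx₀ K u := by
  rw [map_div₀, σyF_zpow_ι₀, ιx₀, RingHom.comp_apply, σyF_zpow_ι₀, σyR_zpow_C]

end Shift

section Summable

variable {K : Type*} [Field K]

lemma isSummableY_zero : IsSummableY K 0 := ⟨0, by simp⟩

lemma IsSummableY.add {f g : Fxy K} (hf : IsSummableY K f) (hg : IsSummableY K g) :
    IsSummableY K (f + g) := by
  obtain ⟨F, rfl⟩ := hf
  obtain ⟨G, rfl⟩ := hg
  exact ⟨F + G, by rw [map_add]; ring⟩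

lemma IsSummableY.sub {f g : Fxy K} (hf : IsSummableY K f) (hg : IsSummableY K g) :
    IsSummableY K (f - g) := by
  obtain ⟨F, rfl⟩ := hf
  obtain ⟨G, rfl⟩ := hg
  exact ⟨F - G, by rw [map_sub]; ring⟩

lemma isSummableY_sum {ι : Type*} (s : Finset ι) {f : ι → Fxy K}
    (hf : ∀ i ∈ s, IsSummableY K (f i)) : IsSummableY K (∑ i ∈ s, f i) :=
  Finset.sum_induction f _ (fun _ _ => IsSummableY.add) isSummableY_zero hf

lemma isSummableY_sub_self (g : Fxy K) : IsSummableY K (σyF K g - g) := ⟨g, rfl⟩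

lemma isSummableY_zpow_sub_self (ℓ : ℤ) (g : Fxy K) : IsSummableY K ((σyF K ^ ℓ) g - g) := by
  induction ℓ using Int.induction_on with
  | zero => simpa using isSummableY_zero
  | succ n ih =>
    have h := (isSummableY_sub_self ((σyF K ^ (n : ℤ)) g)).add ih
    rwa [sub_add_sub_cancel, ← RingAut.mul_apply, ← zpow_one_add, add_comm] at h
  | pred n ih =>
    have h := ih.sub (isSummableY_sub_self ((σyF K ^ (-(n : ℤ) - 1)) g))
    rwa [← RingAut.mul_apply, ← zpow_one_add, add_sub_cancel, sub_sub_sub_cancel_left] at h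

lemma isSummableY_div_sub_zpow_div (ℓ : ℤ) (f : Fxy K) (p : Rxy K) :
    IsSummableY K (f / ι₀ K ((σyR K ^ ℓ) p) - (σyF K ^ (-ℓ)) f / ι₀ K p) := by
  have h := isSummableY_zpow_sub_self ℓ ((σyF K ^ (-ℓ)) f / ι₀ K p)
  rwa [map_div₀, ← RingAut.mul_apply, ← zpow_add, add_neg_cancel, zpow_zero,
    RingAut.one_apply, σyF_zpow_ι₀] at h

end Summable

section Proper

variable {K : Type*} [Field K]

lemma properY_zero : ProperY K 0 := ⟨0, 1, one_ne_zero, by simp, by simp⟩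

lemma ProperY.add {f g : Fxy K} (hf : ProperY K f) (hg : ProperY K g) : ProperY K (f + g) := by
  obtain ⟨a, b, hb, rfl, hab⟩ := hf
  obtain ⟨a', b', hb', rfl, hab'⟩ := hg
  refine ⟨a * b' + b * a', b * b', mul_ne_zero hb hb', ?_, ?_⟩
  · rw [div_add_div _ _ (ι₀_ne_zero hb) (ι₀_ne_zero hb'), map_add, map_mul, map_mul, map_mul]
  · refine (degree_add_le _ _).trans_lt (max_lt ?_ ?_) <;> rw [degree_mul, degree_mul]
    · exact WithBot.add_lt_add_right (degree_ne_bot.mpr hb') hab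
    · exact WithBot.add_lt_add_left (degree_ne_bot.mpr hb) hab'

lemma properY_sum {ι : Type*} (s : Finset ι) {f : ι → Fxy K}
    (hf : ∀ i ∈ s, ProperY K (f i)) : ProperY K (∑ i ∈ s, f i) :=
  Finset.sum_induction f _ (fun _ _ => ProperY.add) properY_zero hf

lemma ProperY.ιx₀_mul {f : Fxy K} (hf : ProperY K f) (c : Polynomial K) :
    ProperY K (ιx₀ K c * f) := by
  obtain ⟨a, b, hb, rfl, hab⟩ := hf
  refine ⟨C c * a, b, hb, by rw [mul_div_assoc', ιx₀_mul_ι₀], ?_⟩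
  calc (C c * a).degree ≤ (C c).degree + a.degree := degree_mul_le _ _
    _ ≤ 0 + a.degree := add_le_add_left degree_C_le _
    _ < b.degree := by rwa [zero_add]

lemma properY_div_C_mul {a p : Rxy K} {u : Polynomial K} (hu : u ≠ 0) (hap : a.degree < p.degree) :
    ProperY K (ι₀ K a / ι₀ K (C u * p)) :=
  ⟨a, C u * p, mul_ne_zero (C_ne_zero.mpr hu) (ne_zero_of_degree_gt hap), rfl,
    by rwa [degree_mul, degree_C hu, zero_add]⟩

end Proper

section SigmaYFree

variable {K : Type*} [Field K]

lemma SigmaYFree.ne_zero {b : Rxy K} (hb : SigmaYFree K b) : b ≠ 0 := by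
  rintro rfl
  simpa using hb 1 one_ne_zero X (dvd_zero _) (by simp)

lemma SigmaYFree.of_dvd {b b' : Rxy K} (hb : SigmaYFree K b) (h : b' ∣ b) : SigmaYFree K b' :=
  fun ℓ hℓ d hdb hdσb => hb ℓ hℓ d (hdb.trans h) (hdσb.trans (map_dvd (F := RingAut (Rxy K)) _ h))

lemma sigmaYFree_of_prime {b : Rxy K} (hb : b ≠ 0)
    (h : ∀ ℓ : ℤ, ℓ ≠ 0 → ∀ q : Rxy K, Prime q → q ∣ b → q ∣ (σyR K ^ ℓ) b → q.natDegree = 0) :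
    SigmaYFree K b := by
  intro ℓ hℓ d
  induction d using UniqueFactorizationMonoid.induction_on_prime with
  | h₁ => exact fun h0 _ => absurd (zero_dvd_iff.mp h0) hb
  | h₂ x hx => exact fun _ _ => natDegree_eq_zero_of_isUnit hx
  | h₃ a q ha hq ih =>
    intro hdb hdσb
    rw [natDegree_mul hq.ne_zero ha,
      h ℓ hℓ q hq ((dvd_mul_right q a).trans hdb) ((dvd_mul_right q a).trans hdσb),
      ih ((dvd_mul_left a q).trans hdb) ((dvd_mul_left a q).trans hdσb)]

lemma sigmaYFree_of_prime_dvd {B b : Rxy K} (hB : B ≠ 0) (hb : SigmaYFree K b)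
    (h : ∀ q : Rxy K, Prime q → q ∣ B → 0 < q.natDegree → q ∣ b) : SigmaYFree K B := by
  refine sigmaYFree_of_prime hB fun ℓ hℓ q hq hqB hqσB => ?_
  by_contra hpos
  have hqb := h q hq hqB (Nat.pos_of_ne_zero hpos)
  have hσq : (σyR K ^ (-ℓ)) q ∣ B := (σyR_zpow_dvd_iff _ _ _).mpr (by rwa [neg_neg])
  have hσqb : (σyR K ^ (-ℓ)) q ∣ b := h _ ((MulEquiv.prime_iff _).mpr hq) hσq
    (by rwa [natDegree_σyR_zpow, Nat.pos_iff_ne_zero])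
  have hqσb : q ∣ (σyR K ^ ℓ) b := by rwa [σyR_zpow_dvd_iff, neg_neg] at hσqb
  exact hpos (hb ℓ hℓ q hqb hqσb)

lemma sigmaYFree_mul {b p : Rxy K} (hb : SigmaYFree K b) (hp : SigmaYFree K p)
    (hbp : ∀ s : ℤ, s ≠ 0 → ∀ d : Rxy K, d ∣ b → d ∣ (σyR K ^ s) p → d.natDegree = 0) :
    SigmaYFree K (b * p) := by
  refine sigmaYFree_of_prime (mul_ne_zero hb.ne_zero hp.ne_zero) fun ℓ hℓ q hq hqbp hqσbp => ?_
  rw [map_mul] at hqσbp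
  rcases hq.dvd_mul.mp hqbp with hqb | hqp <;> rcases hq.dvd_mul.mp hqσbp with hqσb | hqσp
  · exact hb ℓ hℓ q hqb hqσb
  · exact hbp ℓ hℓ q hqb hqσp
  · have hσqb : (σyR K ^ (-ℓ)) q ∣ b := (σyR_zpow_dvd_iff _ _ _).mpr (by rwa [neg_neg])
    rw [← hbp (-ℓ) (neg_ne_zero.mpr hℓ) _ hσqb (map_dvd (F := RingAut (Rxy K)) _ hqp),
      natDegree_σyR_zpow]
  · exact hp ℓ hℓ q hqp hqσp

lemma sigmaYFree_C_mul_scd {ι : Type*} {s : Finset ι} {w : Polynomial K} (hw : w ≠ 0)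
    {b b0 p0 : Rxy K} {pp : ι → Rxy K} (hbfree : SigmaYFree K b) (hb0free : SigmaYFree K b0)
    (hp0b : p0 ∣ b)
    (hp0 : ∀ s : ℤ, s ≠ 0 → ∀ d : Rxy K, d ∣ b0 → d ∣ (σyR K ^ s) p0 → d.natDegree = 0)
    (hpp : ∀ i, pp i ∣ b0) :
    SigmaYFree K (C w * (b0 * (p0 * ∏ i ∈ s, pp i))) := by
  have hb0 := hb0free.ne_zero
  have hne : C w * (b0 * (p0 * ∏ i ∈ s, pp i)) ≠ 0 :=
    mul_ne_zero (C_ne_zero.mpr hw) (mul_ne_zero hb0 (mul_ne_zero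
      (ne_zero_of_dvd_ne_zero hbfree.ne_zero hp0b)
      (Finset.prod_ne_zero_iff.mpr fun i _ => ne_zero_of_dvd_ne_zero hb0 (hpp i))))
  refine sigmaYFree_of_prime_dvd hne (sigmaYFree_mul hb0free (hbfree.of_dvd hp0b) hp0)
    fun q hq hqB hpos => ?_
  rcases hq.dvd_mul.mp hqB with hqw | hq'
  · exact absurd (natDegree_le_of_dvd hqw (C_ne_zero.mpr hw)) (by simpa using hpos.ne')
  rcases hq.dvd_mul.mp hq' with hqb0 | hq''
  · exact dvd_mul_of_dvd_left hqb0 p0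
  rcases hq.dvd_mul.mp hq'' with hqp0 | hqprod
  · exact dvd_mul_of_dvd_right hqp0 b0
  obtain ⟨i, -, hqi⟩ := (hq.dvd_finsetProd_iff pp).mp hqprod
  exact dvd_mul_of_dvd_left (hqi.trans (hpp i)) p0

end SigmaYFree

section Denominator

variable {K : Type*} [Field K]

def HasDenominator (B : Rxy K) (f : Fxy K) : Prop := ∃ A : Rxy K, f = ι₀ K A / ι₀ K B

lemma hasDenominator_div_of_dvd {a b B : Rxy K} (hB : B ≠ 0) (hbB : b ∣ B) :
    HasDenominator B (ι₀ K a / ι₀ K b) := by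
  obtain ⟨c, rfl⟩ := hbB
  refine ⟨a * c, ?_⟩
  rw [map_mul, map_mul, mul_div_mul_right _ _ (ι₀_ne_zero (right_ne_zero_of_mul hB))]

lemma HasDenominator.add {B : Rxy K} {f g : Fxy K} (hf : HasDenominator B f)
    (hg : HasDenominator B g) : HasDenominator B (f + g) := by
  obtain ⟨A, rfl⟩ := hf
  obtain ⟨A', rfl⟩ := hg
  exact ⟨A + A', by rw [map_add, add_div]⟩

lemma hasDenominator_sum {ι : Type*} (s : Finset ι) {B : Rxy K} {f : ι → Fxy K}
    (hf : ∀ i ∈ s, HasDenominator B (f i)) : HasDenominator B (∑ i ∈ s, f i) :=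
  Finset.sum_induction f _ (fun _ _ => HasDenominator.add) ⟨0, by simp⟩ hf

lemma HasDenominator.ιx₀_mul {B : Rxy K} {f : Fxy K} (hf : HasDenominator B f)
    (c : Polynomial K) : HasDenominator B (ιx₀ K c * f) := by
  obtain ⟨A, rfl⟩ := hf
  exact ⟨C c * A, by rw [mul_div_assoc', ιx₀_mul_ι₀]⟩

lemma HasDenominator.sigmaYFreeDenom {B : Rxy K} {f : Fxy K} (hf : HasDenominator B f)
    (hB : SigmaYFree K B) : SigmaYFreeDenom K f := by
  obtain ⟨A, rfl⟩ := hf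
  by_cases hA : A = 0
  · refine ⟨0, 1, one_ne_zero, fun d _ hd => isUnit_of_dvd_one hd, by simp [hA], ?_⟩
    exact fun ℓ _ d hd _ => natDegree_eq_zero_of_isUnit (isUnit_of_dvd_one hd)
  obtain ⟨a', b', c', hcop, rfl, rfl⟩ := UniqueFactorizationMonoid.exists_reduced_factors A hA B
  refine ⟨a', b', right_ne_zero_of_mul hB.ne_zero, hcop, ?_, hB.of_dvd (dvd_mul_left b' c')⟩
  rw [map_mul, map_mul, mul_div_mul_left _ _ (ι₀_ne_zero (left_ne_zero_of_mul hB.ne_zero))]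

end Denominator

theorem statement15_general (K : Type*) [Field K]
    (r r0 : Fxy K)
    -- `b` is the `y`-primitive denominator of `r`:
    (b : Rxy K)
    (hbfree : SigmaYFree K b)
    -- `b0` is the `y`-primitive denominator of `r0`:
    (a0 b0 : Rxy K) (u0 : Polynomial K) (hu0 : u0 ≠ 0)
    (hb0free : SigmaYFree K b0)
    (hr0rep : r0 = ι₀ K a0 / (ιx₀ K u0 * ι₀ K b0))
    (hr0prop : a0.degree < b0.degree)
    -- the `σ_y`-coprime decomposition of `b` with respect to `b0`:
    (m : ℕ) (p0 : Rxy K) (pp : Fin m → Rxy K) (ℓv : Fin m → ℤ)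
    (hscd : b = p0 * ∏ i : Fin m, (σyR K ^ ℓv i) (pp i))
    (hp0 : ∀ s : ℤ, s ≠ 0 → ∀ d : Rxy K, d ∣ b0 → d ∣ (σyR K ^ s) p0 → d.natDegree = 0)
    (hpp : ∀ i, (pp i).Monic ∧ YPrimitive K (pp i) ∧ pp i ∣ b0 ∧ 0 < (pp i).natDegree)
    -- the SCD-based partial fraction decomposition of `r` with respect to `r0`:
    (f0 : Fxy K) (fi : Fin m → Fxy K)
    (hf0 : ∃ (aa : Rxy K) (uu : Polynomial K), uu ≠ 0 ∧
        f0 = ι₀ K aa / ιx₀ K uu ∧ aa.degree < p0.degree)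
    (hfi : ∀ i, ∃ (aa : Rxy K) (uu : Polynomial K), uu ≠ 0 ∧
        fi i = ι₀ K aa / ιx₀ K uu ∧ aa.degree < (pp i).degree)
    (hdecomp : r = f0 / ι₀ K p0 + ∑ i : Fin m, fi i / ι₀ K ((σyR K ^ ℓv i) (pp i)))
    -- the adjusted `σ_y`-remainder `r̃`:
    (rt : Fxy K)
    (hrt : rt = f0 / ι₀ K p0 + ∑ i : Fin m, (σyF K ^ (-(ℓv i))) (fi i) / ι₀ K (pp i)) :
    IsSigmaYRemainderOf K rt r ∧
      ∀ c0 c1 : Polynomial K,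
        ProperY K (ιx₀ K c0 * r0 + ιx₀ K c1 * rt) ∧
          SigmaYFreeDenom K (ιx₀ K c0 * r0 + ιx₀ K c1 * rt) := by
  obtain ⟨aa0, uu0, huu0, rfl, hdeg0⟩ := hf0
  choose aa uu huu hfi hdeg using hfi
  have hr0 : r0 = ι₀ K a0 / ι₀ K (C u0 * b0) := by rw [hr0rep, ιx₀_mul_ι₀]
  have hrt' : rt = ι₀ K aa0 / ι₀ K (C uu0 * p0) +
      ∑ i, ι₀ K ((σyR K ^ (-ℓv i)) (aa i)) / ι₀ K (C (uu i) * pp i) := by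
    simp only [hrt, hfi, σyF_zpow_div_ιx₀, div_div, ιx₀_mul_ι₀]
  have hsum : IsSummableY K (r - rt) := by
    rw [hdecomp, hrt, add_sub_add_left_eq_sub, ← Finset.sum_sub_distrib]
    exact isSummableY_sum _ fun i _ => isSummableY_div_sub_zpow_div (ℓv i) (fi i) (pp i)
  have hprt : ProperY K rt := by
    rw [hrt']
    exact (properY_div_C_mul huu0 hdeg0).add (properY_sum _ fun i _ =>
      properY_div_C_mul (huu i) ((degree_σyR_zpow _ _).trans_lt (hdeg i)))
  have hpr0 : ProperY K r0 := hr0 ▸ properY_div_C_mul hu0 hr0prop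
  set w := u0 * (uu0 * ∏ i, uu i)
  set B := C w * (b0 * (p0 * ∏ i, pp i))
  have hBfree : SigmaYFree K B :=
    sigmaYFree_C_mul_scd (by simp [w, hu0, huu0, Finset.prod_ne_zero_iff, huu]) hbfree hb0free
      ⟨_, hscd⟩ hp0 fun i => (hpp i).2.2.1
  have hB {a' q : Rxy K} {v : Polynomial K} (hv : v ∣ w) (hq : q ∣ b0 * (p0 * ∏ i, pp i)) :
      HasDenominator B (ι₀ K a' / ι₀ K (C v * q)) :=
    hasDenominator_div_of_dvd hBfree.ne_zero (mul_dvd_mul (map_dvd (C : Polynomial K →+* Rxy K) hv) hq)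
  have hr0B : HasDenominator B r0 := hr0 ▸ hB (dvd_mul_right _ _) (dvd_mul_right _ _)
  have hrtB : HasDenominator B rt := hrt' ▸
    (hB ((dvd_mul_right _ _).mul_left _) ((dvd_mul_right _ _).mul_left _)).add
      (hasDenominator_sum _ fun i _ =>
        hB (((Finset.dvd_prod_of_mem uu (Finset.mem_univ i)).mul_left _).mul_left _)
          (((Finset.dvd_prod_of_mem pp (Finset.mem_univ i)).mul_left _).mul_left _))
  exact ⟨⟨hsum, hprt, hrtB.sigmaYFreeDenom hBfree⟩, fun c0 c1 =>
    ⟨(hpr0.ιx₀_mul c0).add (hprt.ιx₀_mul c1),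
      ((hr0B.ιx₀_mul c0).add (hrtB.ιx₀_mul c1)).sigmaYFreeDenom hBfree⟩⟩

/-- Proposition `PROP:adjustrem`.
Let `r, r_0 ∈ K(x,y)` be two nonzero `σ_y`-remainders, with `y`-primitive (`σ_y`-free)
denominators `b, b_0`, and let `r = f_0/p_0 + Σ_{i=1}^{m} f_i/σ_y^{ℓ_i}(p_i)` be the
SCD-based partial fraction decomposition of `r` with respect to `r_0` (based on the
`σ_y`-coprime decomposition `b = p_0 σ_y^{ℓ_1}(p_1) ⋯ σ_y^{ℓ_m}(p_m)` of `b` with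
respect to `b_0`).  Define `r̃ = f_0/p_0 + Σ_{i=1}^{m} σ_y^{−ℓ_i}(f_i)/p_i`.  Then `r̃`
is a `σ_y`-remainder of `r`, and for any `c_0, c_1 ∈ K[x]` the rational function
`c_0 r_0 + c_1 r̃` is proper with respect to `y` with `σ_y`-free denominator (hence is a
`σ_y`-remainder). -/
theorem statement15 (K : Type*) [Field K] [CharZero K]
    (r r0 : Fxy K) (hrne : r ≠ 0) (hr0ne : r0 ≠ 0)
    (hrrem : IsSigmaYRemainder K r) (hr0rem : IsSigmaYRemainder K r0)
    -- `b` is the `y`-primitive denominator of `r`: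
    (a b : Rxy K) (u : Polynomial K) (hu : u ≠ 0) (hb : b ≠ 0)
    (hbprim : YPrimitive K b) (hbfree : SigmaYFree K b)
    (hrrep : r = ι₀ K a / (ιx₀ K u * ι₀ K b))
    (hrred : IsRelPrime a (Polynomial.C u * b)) (hrprop : a.degree < b.degree)
    -- `b0` is the `y`-primitive denominator of `r0`:
    (a0 b0 : Rxy K) (u0 : Polynomial K) (hu0 : u0 ≠ 0) (hb0 : b0 ≠ 0)
    (hb0prim : YPrimitive K b0) (hb0free : SigmaYFree K b0)
    (hr0rep : r0 = ι₀ K a0 / (ιx₀ K u0 * ι₀ K b0))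
    (hr0red : IsRelPrime a0 (Polynomial.C u0 * b0)) (hr0prop : a0.degree < b0.degree)
    -- the `σ_y`-coprime decomposition of `b` with respect to `b0`:
    (m : ℕ) (p0 : Rxy K) (pp : Fin m → Rxy K) (ℓv : Fin m → ℤ)
    (hℓne : ∀ i, ℓv i ≠ 0) (hℓinj : Function.Injective ℓv)
    (hscd : b = p0 * ∏ i : Fin m, (σyR K ^ ℓv i) (pp i))
    (hp0 : ∀ s : ℤ, s ≠ 0 → ∀ d : Rxy K, d ∣ b0 → d ∣ (σyR K ^ s) p0 → d.natDegree = 0)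
    (hpp : ∀ i, (pp i).Monic ∧ YPrimitive K (pp i) ∧ pp i ∣ b0 ∧ 0 < (pp i).natDegree)
    -- the SCD-based partial fraction decomposition of `r` with respect to `r0`:
    (f0 : Fxy K) (fi : Fin m → Fxy K)
    (hf0 : ∃ (aa : Rxy K) (uu : Polynomial K), uu ≠ 0 ∧
        f0 = ι₀ K aa / ιx₀ K uu ∧ aa.degree < p0.degree)
    (hfi : ∀ i, ∃ (aa : Rxy K) (uu : Polynomial K), uu ≠ 0 ∧
        fi i = ι₀ K aa / ιx₀ K uu ∧ aa.degree < (pp i).degree)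
    (hdecomp : r = f0 / ι₀ K p0 + ∑ i : Fin m, fi i / ι₀ K ((σyR K ^ ℓv i) (pp i)))
    -- the adjusted `σ_y`-remainder `r̃`:
    (rt : Fxy K)
    (hrt : rt = f0 / ι₀ K p0 + ∑ i : Fin m, (σyF K ^ (-(ℓv i))) (fi i) / ι₀ K (pp i)) :
    IsSigmaYRemainderOf K rt r ∧
      ∀ c0 c1 : Polynomial K,
        ProperY K (ιx₀ K c0 * r0 + ιx₀ K c1 * rt) ∧
          SigmaYFreeDenom K (ιx₀ K c0 * r0 + ιx₀ K c1 * rt) :=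
  statement15_general K r r0 b hbfree a0 b0 u0 hu0 hb0free hr0rep hr0prop m p0 pp ℓv hscd hp0 hpp f0
    fi hf0 hfi hdecomp rt hrt
end
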